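/- arXiv:0904.1757 — 2 statements merged into one kernel-verified Lean document; each statement's English description precedes it below -/
import Mathlib

section
/- For every natural number l, s_l = Σ_{k=0}^{l} C(l,k) r_k r_{l−k}, where r_m = Σ_{j=0}^{m} S(m,j)·j! and s_l = Σ_{k=0}^{l} S(l,k)·(k+1)!. -/
def stirling2 : ℕ → ℕ → ℕ
  | 0, 0 => 1
  | 0, _ + 1 => 0
  | _ + 1, 0 => 0
  | n + 1, k + 1 => stirling2 n k + (k + 1) * stirling2 n (k + 1)

/-- Fubini number: number of preferential arrangements of an `l`-set. -/
def fubini (l : ℕ) : ℕ := ∑ k ∈ Finset.range (l + 1), stirling2 l k * Nat.factorial k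

/-- Barred preferential arrangement number. -/
def barredFubini (l : ℕ) : ℕ :=
  ∑ k ∈ Finset.range (l + 1), stirling2 l k * Nat.factorial (k + 1)

/-!
Both sides satisfy the recursion `x l = r l + ∑ j < l, C(l, j) x j`, which determines them.
For the convolution this follows from `r n = ∑ j < n, C(n, j) r j` (`n ≠ 0`). For the barred
numbers it follows from `r (n + 1) = ∑ j ≤ n, C(n, j) s j` (split off the block containing a
new element, via `S(n + 1, k + 1) = ∑ j, C(n, j) S(j, k)`) together with
`r (n + 1) + r n = 2 s n`. In terms of exponential generating functions, `R = 1 / (2 - eˣ)` and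
the barred numbers have generating function `R²`.
-/

open Finset
open scoped Nat

theorem stirling2_eq_stirlingSecond : ∀ n k, stirling2 n k = Nat.stirlingSecond n k
  | 0, 0 | 0, _ + 1 | _ + 1, 0 => rfl
  | n + 1, k + 1 => by
    rw [stirling2, Nat.stirlingSecond_succ_succ, stirling2_eq_stirlingSecond n k,
      stirling2_eq_stirlingSecond n (k + 1), add_comm]

theorem stirling2_eq_zero_of_lt {n k : ℕ} (h : n < k) : stirling2 n k = 0 := by
  rw [stirling2_eq_stirlingSecond, Nat.stirlingSecond_eq_zero_of_lt h]

theorem sum_range_stirling2_mul_of_le (f : ℕ → ℕ) {j n : ℕ} (h : j ≤ n) :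
    ∑ k ∈ range (n + 1), stirling2 j k * f k = ∑ k ∈ range (j + 1), stirling2 j k * f k := by
  refine (sum_subset (range_subset_range.mpr (by omega)) fun k _ hkj => ?_).symm
  rw [stirling2_eq_zero_of_lt (by simpa using hkj), zero_mul]

theorem stirling2_succ_succ_eq_sum_choose (n k : ℕ) :
    stirling2 (n + 1) (k + 1) = ∑ j ∈ range (n + 1), n.choose j * stirling2 j k := by
  induction n generalizing k with
  | zero => cases k <;> rfl
  | succ n ih =>
    have pascal := sum_choose_succ_mul (R := ℕ) (fun j _ => stirling2 j k) n
    simp only [Nat.cast_id] at pascal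
    rw [pascal, ← ih]
    cases k with
    | zero => simp [stirling2]
    | succ k =>
      simp only [stirling2, mul_add, sum_add_distrib, mul_left_comm _ (k + 1), ← mul_sum, ← ih]
      ring

theorem fubini_zero : fubini 0 = 1 := rfl

theorem fubini_succ (n : ℕ) :
    fubini (n + 1) = ∑ k ∈ range (n + 1), stirling2 (n + 1) (k + 1) * (k + 1)! := by
  rw [fubini, sum_range_succ']
  rfl

theorem fubini_succ_eq_sum_choose_mul_barredFubini (n : ℕ) :
    fubini (n + 1) = ∑ j ∈ range (n + 1), n.choose j * barredFubini j := calc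
  fubini (n + 1) = ∑ k ∈ range (n + 1), ∑ j ∈ range (n + 1),
      n.choose j * (stirling2 j k * (k + 1)!) := by
    simp only [fubini_succ, stirling2_succ_succ_eq_sum_choose, sum_mul, mul_assoc]
  _ = ∑ j ∈ range (n + 1), n.choose j * ∑ k ∈ range (n + 1), stirling2 j k * (k + 1)! := by
    rw [sum_comm]
    simp only [mul_sum]
  _ = _ := sum_congr rfl fun j hj => by
    rw [barredFubini, sum_range_stirling2_mul_of_le _ (mem_range_succ_iff.mp hj)]

theorem fubini_succ_add_fubini (n : ℕ) : fubini (n + 1) + fubini n = 2 * barredFubini n := by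
  set q := ∑ k ∈ range (n + 1), stirling2 n k * (k * k !) with hq
  have hs : barredFubini n = fubini n + q := by
    rw [barredFubini, fubini, ← sum_add_distrib]
    refine sum_congr rfl fun k _ => ?_
    rw [Nat.factorial_succ]
    ring
  have hr : fubini (n + 1) = barredFubini n + q := by
    have shift : ∑ k ∈ range (n + 1), stirling2 n (k + 1) * ((k + 1) * (k + 1)!) = q := by
      rw [hq, ← sum_range_stirling2_mul_of_le (fun k => k * k !) (Nat.le_succ n),
        sum_range_succ' _ (n + 1)]
      simp
    rw [fubini_succ, barredFubini, ← shift, ← sum_add_distrib]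
    refine sum_congr rfl fun k _ => ?_
    rw [stirling2]
    ring
  omega

theorem fubini_eq_sum_choose_mul_fubini {n : ℕ} (hn : n ≠ 0) :
    fubini n = ∑ j ∈ range n, n.choose j * fubini j := by
  obtain ⟨m, rfl⟩ := Nat.exists_eq_add_one_of_ne_zero hn
  have pascal := sum_choose_succ_mul (R := ℕ) (fun j _ => fubini j) m
  simp only [Nat.cast_id] at pascal
  have hsum : ∑ j ∈ range (m + 1), m.choose j * fubini j
      + ∑ j ∈ range (m + 1), m.choose j * fubini (j + 1) = 2 * fubini (m + 1) := by
    rw [← sum_add_distrib, fubini_succ_eq_sum_choose_mul_barredFubini, mul_sum]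
    refine sum_congr rfl fun j _ => ?_
    rw [mul_left_comm, ← fubini_succ_add_fubini]
    ring
  rw [sum_range_succ, Nat.choose_self, one_mul] at pascal
  omega

theorem barredFubini_eq_fubini_add_sum (n : ℕ) :
    barredFubini n = fubini n + ∑ j ∈ range n, n.choose j * barredFubini j := by
  have h := fubini_succ_eq_sum_choose_mul_barredFubini n
  rw [sum_range_succ, Nat.choose_self, one_mul] at h
  have := fubini_succ_add_fubini n
  omega

theorem sum_range_sum_range_sub_comm {M : Type*} [AddCommMonoid M] (n : ℕ) (f : ℕ → ℕ → M) :
    ∑ k ∈ range n, ∑ i ∈ range (n - k), f k i =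
      ∑ j ∈ range n, ∑ k ∈ range (j + 1), f k (j - k) := by
  rw [sum_sigma', sum_sigma']
  refine sum_nbij' (fun x ↦ ⟨x.1 + x.2, x.1⟩) (fun x ↦ ⟨x.2, x.1 - x.2⟩) ?_ ?_ ?_ ?_ ?_ <;>
    simp only [mem_sigma, mem_range, Sigma.forall, Sigma.mk.injEq, heq_eq_eq,
      Nat.add_sub_cancel_left, and_true, implies_true] <;>
    intros <;> omega

theorem sum_choose_mul_fubini_mul_fubini_eq (l : ℕ) :
    ∑ k ∈ range (l + 1), l.choose k * fubini k * fubini (l - k) =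
      fubini l + ∑ j ∈ range l,
        l.choose j * ∑ k ∈ range (j + 1), j.choose k * fubini k * fubini (j - k) := calc
  _ = fubini l + ∑ k ∈ range l, l.choose k * fubini k * fubini (l - k) := by
    rw [sum_range_succ, Nat.choose_self, Nat.sub_self, fubini_zero, one_mul, mul_one, add_comm]
  _ = fubini l + ∑ k ∈ range l, ∑ i ∈ range (l - k),
      l.choose k * (l - k).choose i * (fubini k * fubini i) := by
    congr 1
    refine sum_congr rfl fun k hk => ?_
    rw [fubini_eq_sum_choose_mul_fubini (n := l - k) (by simp at hk; omega), mul_sum]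
    refine sum_congr rfl fun i _ => ?_
    ring
  _ = fubini l + ∑ j ∈ range l, ∑ k ∈ range (j + 1),
      l.choose k * (l - k).choose (j - k) * (fubini k * fubini (j - k)) := by
    rw [sum_range_sum_range_sub_comm]
  _ = _ := by
    congr 1
    refine sum_congr rfl fun j _ => ?_
    rw [mul_sum]
    refine sum_congr rfl fun k hk => ?_
    rw [← Nat.choose_mul (mem_range_succ_iff.mp hk)]
    ring

theorem stmt_11 (l : ℕ) :
    barredFubini l = ∑ k ∈ Finset.range (l + 1), l.choose k * fubini k * fubini (l - k) := by
  induction l using Nat.strong_induction_on with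
  | _ l ih =>
    rw [barredFubini_eq_fubini_add_sum, sum_choose_mul_fubini_mul_fubini_eq]
    congr 1
    exact sum_congr rfl fun j hj => by rw [ih j (mem_range.mp hj)]
end

section
/- For every natural number l, s_l = (1/4) Σ_{n≥0} (n+1) n^l / 2^n, with the series converging (convention 0^0 = 1). -/
/-!
Write `n⁽ᵏ⁾ = n(n-1)⋯(n-k+1)` for falling factorials. Expanding `n ^ l = ∑ₖ S(l, k) n⁽ᵏ⁾` and
using `(n + 1) n⁽ᵏ⁾ = (n + 1)⁽ᵏ⁺¹⁾`, the series becomes `∑ₖ S(l, k) ∑ₙ (n + 1)⁽ᵏ⁺¹⁾ / 2ⁿ`.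
Differentiating the geometric series gives `∑ₙ n⁽ʲ⁾ rⁿ = j! rʲ / (1 - r)ʲ⁺¹`, so each inner
series equals `2 (k + 1)! 2⁻⁽ᵏ⁺¹⁾ / 2⁻⁽ᵏ⁺²⁾ = 4 (k + 1)!`.
-/

open Finset Nat

theorem stirling2_eq_stirlingSecond_s13 : stirling2 = stirlingSecond := by
  funext n k
  induction n generalizing k with
  | zero => cases k <;> rfl
  | succ n ih =>
    cases k with
    | zero => rfl
    | succ k => rw [stirling2, stirlingSecond_succ_succ, ih, ih, add_comm]

theorem Nat.mul_descFactorial (n k : ℕ) :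
    n * n.descFactorial k = n.descFactorial (k + 1) + k * n.descFactorial k := by
  rcases le_or_gt k n with hkn | hnk
  · rw [descFactorial_succ, ← add_mul, Nat.sub_add_cancel hkn]
  · simp [descFactorial_eq_zero_iff_lt.mpr hnk]

theorem Nat.pow_eq_sum_stirlingSecond_mul_descFactorial (n l : ℕ) :
    n ^ l = ∑ k ∈ range (l + 1), stirlingSecond l k * n.descFactorial k := by
  induction l with
  | zero => simp
  | succ l ih =>
    have shift :
        ∑ k ∈ range (l + 1), (k + 1) * stirlingSecond l (k + 1) * n.descFactorial (k + 1)
          = ∑ k ∈ range (l + 1), k * stirlingSecond l k * n.descFactorial k := by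
      rw [sum_range_succ, sum_range_succ', stirlingSecond_eq_zero_of_lt (lt_succ_self l)]
      simp
    calc n ^ (l + 1)
        = ∑ k ∈ range (l + 1), (stirlingSecond l k * n.descFactorial (k + 1)
            + k * stirlingSecond l k * n.descFactorial k) := by
          rw [pow_succ', ih, mul_sum]
          refine sum_congr rfl fun k _ ↦ ?_
          rw [mul_left_comm, mul_descFactorial]
          ring
      _ = ∑ k ∈ range (l + 1), stirlingSecond (l + 1) (k + 1) * n.descFactorial (k + 1) := by
          rw [sum_add_distrib, ← shift, ← sum_add_distrib]
          refine sum_congr rfl fun k _ ↦ ?_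
          rw [stirlingSecond_succ_succ]
          ring
      _ = ∑ k ∈ range (l + 2), stirlingSecond (l + 1) k * n.descFactorial k := by
          rw [sum_range_succ' _ (l + 1), stirlingSecond_succ_zero, zero_mul, add_zero]

theorem hasSum_descFactorial_mul_geometric {𝕜 : Type*} [NormedField 𝕜] [CompleteSpace 𝕜]
    (k : ℕ) {r : 𝕜} (hr : ‖r‖ < 1) :
    HasSum (fun n ↦ (n.descFactorial k : 𝕜) * r ^ n) (k ! * r ^ k / (1 - r) ^ (k + 1)) := by
  have hvanish : ∑ i ∈ range k, (i.descFactorial k : 𝕜) * r ^ i = 0 :=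
    sum_eq_zero fun i hi ↦ by
      rw [descFactorial_eq_zero_iff_lt.mpr (mem_range.mp hi), cast_zero, zero_mul]
  have hshift : (fun n ↦ ((n + k).descFactorial k : 𝕜) * r ^ (n + k))
      = fun n ↦ (k ! * r ^ k) * ((n + k).choose k * r ^ n) := by
    funext n
    rw [descFactorial_eq_factorial_mul_choose, pow_add]
    push_cast
    ring
  rw [← hasSum_nat_add_iff' k, hvanish, sub_zero, hshift, ← mul_one_div]
  exact (hasSum_choose_mul_geometric_of_norm_lt_one k hr).mul_left _

theorem hasSum_succ_mul_descFactorial_div_two_pow (k : ℕ) :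
    HasSum (fun n : ℕ ↦ ((n : ℝ) + 1) * n.descFactorial k / 2 ^ n) (4 * (k + 1)!) := by
  have h := hasSum_descFactorial_mul_geometric (k + 1) (r := (1 / 2 : ℝ)) (by norm_num)
  rw [← hasSum_nat_add_iff' 1] at h
  have hterm : (fun n : ℕ ↦ ((n : ℝ) + 1) * n.descFactorial k / 2 ^ n)
      = fun n ↦ 2 * (((n + 1).descFactorial (k + 1) : ℝ) * (1 / 2) ^ (n + 1)) := by
    funext n
    rw [succ_descFactorial_succ, pow_succ, one_div_pow]
    push_cast
    field_simp
  have hval : (4 * (k + 1)! : ℝ) = 2 * ((k + 1)! * (1 / 2) ^ (k + 1) / (1 - 1 / 2) ^ (k + 1 + 1)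
      - ∑ i ∈ range 1, (i.descFactorial (k + 1) : ℝ) * (1 / 2) ^ i) := by
    simp only [range_one, sum_singleton, zero_descFactorial_succ]
    field_simp
    ring
  rw [hterm, hval]
  exact h.mul_left 2

theorem stmt_13 (l : ℕ) :
    HasSum (fun n : ℕ => ((n : ℝ) + 1) * (n : ℝ) ^ l / 2 ^ n) (4 * barredFubini l) := by
  have hterm (n : ℕ) : ((n : ℝ) + 1) * (n : ℝ) ^ l / 2 ^ n
      = ∑ k ∈ range (l + 1),
          (stirlingSecond l k : ℝ) * (((n : ℝ) + 1) * n.descFactorial k / 2 ^ n) := by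
    rw [← cast_pow, pow_eq_sum_stirlingSecond_mul_descFactorial]
    push_cast
    rw [mul_sum, sum_div]
    exact sum_congr rfl fun k _ ↦ by ring
  have hval : (4 * barredFubini l : ℝ)
      = ∑ k ∈ range (l + 1), (stirlingSecond l k : ℝ) * (4 * (k + 1)!) := by
    rw [barredFubini, stirling2_eq_stirlingSecond_s13]
    push_cast
    rw [mul_sum]
    exact sum_congr rfl fun k _ ↦ by ring
  rw [funext hterm, hval]
  exact hasSum_sum fun k _ ↦ (hasSum_succ_mul_descFactorial_div_two_pow k).mul_left _
end
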